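/- Let U, V, M be given real matrices with U^T U = I and V^T V = I. Then Z* = U M V^T is the unique minimizer of ‖Z‖_* subject to U^T Z V = M; that is, any feasible Z with ‖Z‖_* = ‖M‖_* must equal U M V^T. -/

import Mathlib

open Matrix

/-- The nuclear norm of a real matrix: the sum of its singular values,
i.e. the sum of the square roots of the eigenvalues of `Mᵀ * M`. -/
noncomputable def nuclearNorm {m n : Type*} [Fintype m] [Fintype n] [DecidableEq n]
    (M : Matrix m n ℝ) : ℝ :=
  ∑ i, Real.sqrt ((show (Mᵀ * M).IsHermitian by
    simpa [Matrix.conjTranspose_eq_transpose_of_trivial] using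
      Matrix.isHermitian_conjTranspose_mul_self M).eigenvalues i)

/-!
The nuclear norm is dual to the operator norm: `trace (Wᵀ * A) ≤ ‖A‖_*` whenever `‖W‖ ≤ 1`, with
equality for the polar factor of `A`. Hence multiplying by contractions cannot increase the
nuclear norm, and `‖U M Vᵀ‖_* ≤ ‖M‖_* = ‖Uᵀ Z V‖_* ≤ ‖Z‖_*`. If `‖Z‖_* = ‖M‖_*`, the contraction
`U W Vᵀ`, with `W` the polar factor of `M`, attains the nuclear norm of `Z`. Equality in
Cauchy–Schwarz along the right singular vectors of `Z` then forces `Z` to be fixed by the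
projections `U Uᵀ` and `V Vᵀ`, so `Z = U (Uᵀ Z V) Vᵀ = U M Vᵀ`.
-/

open scoped Matrix.Norms.L2Operator

section DotProduct

variable {ι : Type*} [Fintype ι]

lemma dotProduct_le_sqrt_of_dotProduct_self_le_one {x y : ι → ℝ} (hx : x ⬝ᵥ x ≤ 1) :
    x ⬝ᵥ y ≤ √(y ⬝ᵥ y) :=
  calc x ⬝ᵥ y ≤ √(x ⬝ᵥ x) * √(y ⬝ᵥ y) := by
        simpa only [dotProduct, sq] using Real.sum_mul_le_sqrt_mul_sqrt Finset.univ x y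
    _ ≤ √(y ⬝ᵥ y) := mul_le_of_le_one_left (Real.sqrt_nonneg _) (Real.sqrt_le_one.mpr hx)

lemma eq_sqrt_smul_of_dotProduct_eq_sqrt {x y : ι → ℝ} (hx : x ⬝ᵥ x ≤ 1)
    (h : x ⬝ᵥ y = √(y ⬝ᵥ y)) : y = √(y ⬝ᵥ y) • x := by
  set s := √(y ⬝ᵥ y)
  have hs : s * s = y ⬝ᵥ y := Real.mul_self_sqrt (dotProduct_self_star_nonneg y)
  have hexpand : (y - s • x) ⬝ᵥ (y - s • x) = s ^ 2 * (x ⬝ᵥ x - 1) := by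
    simp only [sub_dotProduct, dotProduct_sub, smul_dotProduct, dotProduct_smul, smul_eq_mul,
      dotProduct_comm y x, h, ← hs]
    ring
  have hzero : (y - s • x) ⬝ᵥ (y - s • x) = 0 :=
    le_antisymm (hexpand ▸ mul_nonpos_of_nonneg_of_nonpos (sq_nonneg s) (by linarith))
      (dotProduct_self_star_nonneg _)
  exact sub_eq_zero.mp (dotProduct_self_eq_zero.mp hzero)

lemma norm_toLp_sq (x : ι → ℝ) : ‖WithLp.toLp 2 x‖ ^ 2 = x ⬝ᵥ x := by
  rw [← real_inner_self_eq_norm_sq, EuclideanSpace.inner_eq_star_dotProduct]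
  simp

end DotProduct

section L2OpNorm

variable {m n : Type*} [Fintype m] [Fintype n] [DecidableEq n]

lemma dotProduct_mulVec_self_le {W : Matrix m n ℝ} (hW : ‖W‖ ≤ 1) (x : n → ℝ) :
    (W *ᵥ x) ⬝ᵥ (W *ᵥ x) ≤ x ⬝ᵥ x := by
  have h := (l2_opNorm_mulVec W (WithLp.toLp 2 x)).trans
    (mul_le_of_le_one_left (norm_nonneg _) hW)
  rw [← norm_toLp_sq, ← norm_toLp_sq]
  exact pow_le_pow_left₀ (norm_nonneg _) h 2

lemma l2_opNorm_le_one_of_l2_opNorm_transpose_mul_self_le_one {W : Matrix m n ℝ}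
    (h : ‖Wᵀ * W‖ ≤ 1) : ‖W‖ ≤ 1 := by
  rw [← conjTranspose_eq_transpose_of_trivial, l2_opNorm_conjTranspose_mul_self] at h
  nlinarith [norm_nonneg W]

lemma l2_opNorm_diagonal_le_one {e : n → ℝ} (he : ∀ i, |e i| ≤ 1) :
    ‖diagonal e‖ ≤ 1 := by
  rw [l2_opNorm_diagonal]
  exact (pi_norm_le_iff_of_nonneg zero_le_one).2 he

lemma l2_opNorm_le_one_of_transpose_mul_self_eq_one {U : Matrix m n ℝ}
    (hU : Uᵀ * U = 1) : ‖U‖ ≤ 1 := by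
  refine l2_opNorm_le_one_of_l2_opNorm_transpose_mul_self_le_one ?_
  rw [hU, ← diagonal_one]
  exact l2_opNorm_diagonal_le_one fun _ => by simp

lemma l2_opNorm_transpose [DecidableEq m] (U : Matrix m n ℝ) : ‖Uᵀ‖ = ‖U‖ := by
  rw [← conjTranspose_eq_transpose_of_trivial]
  exact l2_opNorm_conjTranspose U

lemma l2_opNorm_mul_mul_le_one {p q : Type*} [Fintype p] [Fintype q] [DecidableEq p]
    [DecidableEq q] {P : Matrix m n ℝ} {Q : Matrix n p ℝ} {R : Matrix p q ℝ} (hP : ‖P‖ ≤ 1)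
    (hQ : ‖Q‖ ≤ 1) (hR : ‖R‖ ≤ 1) : ‖P * Q * R‖ ≤ 1 :=
  calc ‖P * Q * R‖ ≤ ‖P‖ * ‖Q‖ * ‖R‖ :=
        (l2_opNorm_mul _ _).trans
          (mul_le_mul_of_nonneg_right (l2_opNorm_mul _ _) (norm_nonneg _))
    _ ≤ 1 := mul_le_one₀ (mul_le_one₀ hP (norm_nonneg _) hQ) (norm_nonneg _) hR

lemma transpose_mulVec_mulVec_eq_self {W : Matrix m n ℝ} (hW : ‖W‖ ≤ 1) {y : n → ℝ}
    (hy : y ⬝ᵥ y = 1) (hWy : (W *ᵥ y) ⬝ᵥ (W *ᵥ y) = 1) : Wᵀ *ᵥ (W *ᵥ y) = y := by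
  classical
  have hWt : ‖Wᵀ‖ ≤ 1 := (l2_opNorm_transpose W).trans_le hW
  have h := eq_sqrt_smul_of_dotProduct_eq_sqrt (y := y)
    ((dotProduct_mulVec_self_le hWt _).trans_eq hWy)
    (by rw [dotProduct_comm, dotProduct_mulVec, vecMul_transpose, hWy, hy, Real.sqrt_one])
  rw [hy, Real.sqrt_one, one_smul] at h
  exact h.symm

end L2OpNorm

lemma mul_transpose_mul_eq_of_eq_mul {k l : Type*} [Fintype k] [Fintype l] {A W : Matrix k l ℝ}
    {S : Matrix l l ℝ} (hS : Sᵀ = S) (hA : A = W * S) (hWWS : Wᵀ * W * S = S) :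
    W * Wᵀ * A = A ∧ A * Wᵀ * W = A := by
  have hSWW : S * (Wᵀ * W) = S :=
    calc S * (Wᵀ * W) = (Wᵀ * W * S)ᵀ := by
          rw [transpose_mul, hS, transpose_mul, transpose_transpose]
      _ = S := by rw [hWWS, hS]
  constructor
  · calc W * Wᵀ * A = W * (Wᵀ * W * S) := by rw [hA]; simp only [Matrix.mul_assoc]
      _ = A := by rw [hWWS, hA]
  · calc A * Wᵀ * W = W * (S * (Wᵀ * W)) := by rw [hA]; simp only [Matrix.mul_assoc]
      _ = A := by rw [hSWW, hA]

section Diagonalization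

/- `Yᵀ j` is the `j`-th column of `Y`. Under `Yᵀ * Y = 1` and `Yᵀ * (Aᵀ * A) * Y = diagonal μ`
the columns of `Y` are an orthonormal eigenbasis of `Aᵀ * A`, and the `√(μ j)` are the singular
values of `A`. -/

variable {k l : Type*} [Fintype k] [Fintype l] [DecidableEq l]
  {A W : Matrix k l ℝ} {Y : Matrix l l ℝ} {μ : l → ℝ}

lemma trace_transpose_mul_eq_sum_dotProduct (hY : Yᵀ * Y = 1) :
    trace (Wᵀ * A) = ∑ j, (W *ᵥ Yᵀ j) ⬝ᵥ (A *ᵥ Yᵀ j) := by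
  have hY' : Y * Yᵀ = 1 := mul_eq_one_comm.mp hY
  calc trace (Wᵀ * A) = trace ((W * Y)ᵀ * (A * Y)) := by
        rw [transpose_mul, Matrix.mul_assoc, trace_mul_comm Yᵀ]
        simp only [Matrix.mul_assoc, hY', Matrix.mul_one]
    _ = ∑ j, (W *ᵥ Yᵀ j) ⬝ᵥ (A *ᵥ Yᵀ j) := rfl

lemma dotProduct_mulVec_self_eq (hAY : Yᵀ * (Aᵀ * A) * Y = diagonal μ) (j : l) :
    (A *ᵥ Yᵀ j) ⬝ᵥ (A *ᵥ Yᵀ j) = μ j := by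
  have := congrFun (congrFun hAY j) j
  rw [diagonal_apply_eq] at this
  rw [← this, ← Matrix.mul_assoc, ← transpose_mul, Matrix.mul_assoc]
  rfl

lemma dotProduct_transpose_self_eq_one (hY : Yᵀ * Y = 1) (j : l) :
    Yᵀ j ⬝ᵥ Yᵀ j = 1 :=
  (congrFun (congrFun hY j) j).trans (one_apply_eq j)

lemma trace_transpose_mul_le_sum_sqrt (hY : Yᵀ * Y = 1)
    (hAY : Yᵀ * (Aᵀ * A) * Y = diagonal μ) (hW : ‖W‖ ≤ 1) :
    trace (Wᵀ * A) ≤ ∑ j, √(μ j) := by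
  rw [trace_transpose_mul_eq_sum_dotProduct hY]
  gcongr with j
  rw [← dotProduct_mulVec_self_eq hAY j]
  exact dotProduct_le_sqrt_of_dotProduct_self_le_one
    ((dotProduct_mulVec_self_le hW _).trans_eq (dotProduct_transpose_self_eq_one hY j))

lemma mulVec_eq_sqrt_smul_of_trace_transpose_mul_eq (hY : Yᵀ * Y = 1)
    (hAY : Yᵀ * (Aᵀ * A) * Y = diagonal μ) (hW : ‖W‖ ≤ 1)
    (h : trace (Wᵀ * A) = ∑ j, √(μ j)) (j : l) : A *ᵥ Yᵀ j = √(μ j) • W *ᵥ Yᵀ j := by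
  have hWcol : ∀ i, (W *ᵥ Yᵀ i) ⬝ᵥ (W *ᵥ Yᵀ i) ≤ 1 := fun i =>
    (dotProduct_mulVec_self_le hW _).trans_eq (dotProduct_transpose_self_eq_one hY i)
  have hle : ∀ i ∈ Finset.univ, (W *ᵥ Yᵀ i) ⬝ᵥ (A *ᵥ Yᵀ i) ≤ √(μ i) := fun i _ => by
    rw [← dotProduct_mulVec_self_eq hAY i]
    exact dotProduct_le_sqrt_of_dotProduct_self_le_one (hWcol i)
  rw [trace_transpose_mul_eq_sum_dotProduct hY] at h
  have hj := (Finset.sum_eq_sum_iff_of_le hle).1 h j (Finset.mem_univ j)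
  rw [← dotProduct_mulVec_self_eq hAY j] at hj ⊢
  exact eq_sqrt_smul_of_dotProduct_eq_sqrt (hWcol j) hj

lemma sqrt_smul_transpose_mul_mulVec_eq_of_trace_transpose_mul_eq (hY : Yᵀ * Y = 1)
    (hAY : Yᵀ * (Aᵀ * A) * Y = diagonal μ) (hW : ‖W‖ ≤ 1)
    (h : trace (Wᵀ * A) = ∑ j, √(μ j)) (j : l) :
    √(μ j) • (Wᵀ * W) *ᵥ Yᵀ j = √(μ j) • Yᵀ j := by
  rcases eq_or_ne (√(μ j)) 0 with h0 | h0
  · simp [h0]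
  have hμ : √(μ j) * √(μ j) = μ j :=
    Real.mul_self_sqrt (dotProduct_mulVec_self_eq hAY j ▸ dotProduct_self_star_nonneg _)
  have hWy : (W *ᵥ Yᵀ j) ⬝ᵥ (W *ᵥ Yᵀ j) = 1 := by
    have hAy := dotProduct_mulVec_self_eq hAY j
    rw [mulVec_eq_sqrt_smul_of_trace_transpose_mul_eq hY hAY hW h j, smul_dotProduct,
      dotProduct_smul, smul_eq_mul, smul_eq_mul] at hAy
    refine mul_left_cancel₀ (mul_ne_zero h0 h0) ?_
    linear_combination hAy - hμ
  rw [← mulVec_mulVec,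
    transpose_mulVec_mulVec_eq_self hW (dotProduct_transpose_self_eq_one hY j) hWy]

lemma mul_transpose_mul_eq_of_trace_transpose_mul_eq (hY : Yᵀ * Y = 1)
    (hAY : Yᵀ * (Aᵀ * A) * Y = diagonal μ) (hW : ‖W‖ ≤ 1)
    (h : trace (Wᵀ * A) = ∑ j, √(μ j)) : W * Wᵀ * A = A ∧ A * Wᵀ * W = A := by
  have hYY : Y * Yᵀ = 1 := mul_eq_one_comm.mp hY
  set D := diagonal fun j => √(μ j)
  have hAY' : A * Y = W * Y * D := by
    ext i j
    rw [mul_diagonal]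
    exact (congrFun (mulVec_eq_sqrt_smul_of_trace_transpose_mul_eq hY hAY hW h j) i).trans
      (mul_comm _ _)
  have hWWY : Wᵀ * W * Y * D = Y * D := by
    ext i j
    rw [mul_diagonal, mul_diagonal]
    exact (mul_comm _ _).trans ((congrFun
      (sqrt_smul_transpose_mul_mulVec_eq_of_trace_transpose_mul_eq hY hAY hW h j) i).trans
      (mul_comm _ _))
  refine mul_transpose_mul_eq_of_eq_mul (S := Y * D * Yᵀ) ?_ ?_ ?_
  · simp only [D, transpose_mul, transpose_transpose, diagonal_transpose, Matrix.mul_assoc]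
  · calc A = A * Y * Yᵀ := by rw [Matrix.mul_assoc, hYY, Matrix.mul_one]
      _ = W * (Y * D * Yᵀ) := by rw [hAY']; simp only [Matrix.mul_assoc]
  · simp only [← Matrix.mul_assoc, hWWY]

lemma exists_trace_transpose_mul_eq_sum_sqrt (hY : Yᵀ * Y = 1)
    (hAY : Yᵀ * (Aᵀ * A) * Y = diagonal μ) :
    ∃ W : Matrix k l ℝ, ‖W‖ ≤ 1 ∧ trace (Wᵀ * A) = ∑ j, √(μ j) := by
  -- `A * Y * D * Yᵀ` is the polar factor of `A`; `0⁻¹ = 0` discards the kernel of `A`.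
  set D : Matrix l l ℝ := diagonal fun j => (√(μ j))⁻¹
  have hYY : Y * Yᵀ = 1 := mul_eq_one_comm.mp hY
  have hWt : (A * Y * D * Yᵀ)ᵀ = Y * D * (Yᵀ * Aᵀ) := by
    simp only [D, transpose_mul, transpose_transpose, diagonal_transpose, Matrix.mul_assoc]
  refine ⟨A * Y * D * Yᵀ, ?_, ?_⟩
  · apply l2_opNorm_le_one_of_l2_opNorm_transpose_mul_self_le_one
    have : (A * Y * D * Yᵀ)ᵀ * (A * Y * D * Yᵀ) = Y * (D * diagonal μ * D) * Yᵀ := by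
      rw [hWt, ← hAY]; simp only [Matrix.mul_assoc]
    rw [this, diagonal_mul_diagonal, diagonal_mul_diagonal]
    refine l2_opNorm_mul_mul_le_one (l2_opNorm_le_one_of_transpose_mul_self_eq_one hY)
      (l2_opNorm_diagonal_le_one fun j => ?_)
      (l2_opNorm_le_one_of_transpose_mul_self_eq_one (by rwa [transpose_transpose]))
    rcases eq_or_ne (√(μ j)) 0 with h0 | h0
    · simp [h0]
    · rw [← Real.mul_self_sqrt (Real.sqrt_ne_zero'.mp h0).le]
      field_simp
      simp [h0]
  · calc trace ((A * Y * D * Yᵀ)ᵀ * A) = trace (D * (Yᵀ * (Aᵀ * A) * Y)) := by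
          rw [hWt, Matrix.mul_assoc Y, Matrix.mul_assoc Y, trace_mul_comm Y]
          simp only [Matrix.mul_assoc]
      _ = ∑ j, √(μ j) := by
          rw [hAY, diagonal_mul_diagonal, trace_diagonal]
          simp only [inv_mul_eq_div, Real.div_sqrt]

end Diagonalization

lemma trace_transpose_mul_mul_mul {k l k' l' : Type*} [Fintype k] [Fintype l] [Fintype k']
    [Fintype l'] (W : Matrix k' l' ℝ) (P : Matrix k' k ℝ) (Z : Matrix k l ℝ) (Q : Matrix l l' ℝ) :
    trace (Wᵀ * (P * Z * Q)) = trace ((Pᵀ * W * Qᵀ)ᵀ * Z) := by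
  rw [transpose_mul, transpose_mul, transpose_transpose, transpose_transpose, Matrix.mul_assoc Q,
    trace_mul_comm Q]
  simp only [Matrix.mul_assoc]

section NuclearNorm

variable {k l : Type*} [Fintype k] [Fintype l] [DecidableEq l]

lemma exists_diagonal_nuclearNorm_eq_sum_sqrt (A : Matrix k l ℝ) :
    ∃ Y : Matrix l l ℝ, Yᵀ * Y = 1 ∧ ∃ μ : l → ℝ,
      Yᵀ * (Aᵀ * A) * Y = diagonal μ ∧ nuclearNorm A = ∑ j, √(μ j) := by
  have hA : (Aᵀ * A).IsHermitian := by
    simpa [conjTranspose_eq_transpose_of_trivial] using isHermitian_conjTranspose_mul_self A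
  refine ⟨hA.eigenvectorUnitary, ?_, hA.eigenvalues, ?_, rfl⟩
  · simpa [star_eq_conjTranspose] using Unitary.coe_star_mul_self hA.eigenvectorUnitary
  · simpa [Unitary.conjStarAlgAut_star_apply, star_eq_conjTranspose] using
      hA.conjStarAlgAut_star_eigenvectorUnitary

lemma trace_transpose_mul_le_nuclearNorm {W : Matrix k l ℝ} (hW : ‖W‖ ≤ 1) (A : Matrix k l ℝ) :
    trace (Wᵀ * A) ≤ nuclearNorm A := by
  obtain ⟨Y, hY, μ, hAY, hA⟩ := exists_diagonal_nuclearNorm_eq_sum_sqrt A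
  exact hA ▸ trace_transpose_mul_le_sum_sqrt hY hAY hW

lemma exists_trace_transpose_mul_eq_nuclearNorm (A : Matrix k l ℝ) :
    ∃ W : Matrix k l ℝ, ‖W‖ ≤ 1 ∧ trace (Wᵀ * A) = nuclearNorm A := by
  obtain ⟨Y, hY, μ, hAY, hA⟩ := exists_diagonal_nuclearNorm_eq_sum_sqrt A
  exact hA ▸ exists_trace_transpose_mul_eq_sum_sqrt hY hAY

lemma mul_transpose_mul_eq_of_trace_transpose_mul_eq_nuclearNorm {W A : Matrix k l ℝ}
    (hW : ‖W‖ ≤ 1) (h : trace (Wᵀ * A) = nuclearNorm A) : W * Wᵀ * A = A ∧ A * Wᵀ * W = A := by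
  obtain ⟨Y, hY, μ, hAY, hA⟩ := exists_diagonal_nuclearNorm_eq_sum_sqrt A
  exact mul_transpose_mul_eq_of_trace_transpose_mul_eq hY hAY hW (h.trans hA)

lemma nuclearNorm_mul_mul_le {k' l' : Type*} [Fintype k'] [Fintype l'] [DecidableEq k]
    [DecidableEq k'] [DecidableEq l'] {P : Matrix k' k ℝ} {Q : Matrix l l' ℝ} (hP : ‖P‖ ≤ 1)
    (hQ : ‖Q‖ ≤ 1) (Z : Matrix k l ℝ) : nuclearNorm (P * Z * Q) ≤ nuclearNorm Z := by
  obtain ⟨W, hW, hWZ⟩ := exists_trace_transpose_mul_eq_nuclearNorm (P * Z * Q)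
  have hPWQ : ‖Pᵀ * W * Qᵀ‖ ≤ 1 := l2_opNorm_mul_mul_le_one
    ((l2_opNorm_transpose P).trans_le hP) hW ((l2_opNorm_transpose Q).trans_le hQ)
  calc nuclearNorm (P * Z * Q) = trace ((Pᵀ * W * Qᵀ)ᵀ * Z) := by
        rw [← hWZ, trace_transpose_mul_mul_mul]
    _ ≤ nuclearNorm Z := trace_transpose_mul_le_nuclearNorm hPWQ Z

end NuclearNorm

lemma eq_mul_mul_transpose_of_nuclearNorm_eq {k l m n : Type*} [Fintype k] [Fintype l]
    [Fintype m] [Fintype n] [DecidableEq l] [DecidableEq m] [DecidableEq n]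
    {U : Matrix k m ℝ} {V : Matrix l n ℝ} {M : Matrix m n ℝ} {Z : Matrix k l ℝ}
    (hU : Uᵀ * U = 1) (hV : Vᵀ * V = 1) (hZ : Uᵀ * Z * V = M)
    (h : nuclearNorm Z = nuclearNorm M) : Z = U * M * Vᵀ := by
  obtain ⟨W, hW, hWM⟩ := exists_trace_transpose_mul_eq_nuclearNorm M
  set W' := U * W * Vᵀ
  have hW' : ‖W'‖ ≤ 1 :=
    l2_opNorm_mul_mul_le_one (l2_opNorm_le_one_of_transpose_mul_self_eq_one hU) hW
      ((l2_opNorm_transpose V).trans_le (l2_opNorm_le_one_of_transpose_mul_self_eq_one hV))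
  have htr : trace (W'ᵀ * Z) = nuclearNorm Z := by
    rw [h, ← hWM, ← hZ, trace_transpose_mul_mul_mul, transpose_transpose]
  obtain ⟨hleft, hright⟩ := mul_transpose_mul_eq_of_trace_transpose_mul_eq_nuclearNorm hW' htr
  have hUZ : U * Uᵀ * Z = Z :=
    calc U * Uᵀ * Z = U * Uᵀ * (W' * W'ᵀ * Z) := by rw [hleft]
      _ = W' * W'ᵀ * Z := by
          simp only [W', ← Matrix.mul_assoc, Matrix.mul_assoc U Uᵀ U, hU, Matrix.mul_one]
      _ = Z := hleft
  have hZV : Z * (V * Vᵀ) = Z :=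
    calc Z * (V * Vᵀ) = Z * W'ᵀ * W' * (V * Vᵀ) := by rw [hright]
      _ = Z * W'ᵀ * W' := by
          simp only [W', ← Matrix.mul_assoc, Matrix.mul_assoc _ Vᵀ V, hV, Matrix.mul_one]
      _ = Z := hright
  calc Z = U * Uᵀ * Z * (V * Vᵀ) := by rw [hUZ, hZV]
    _ = U * M * Vᵀ := by rw [← hZ]; simp only [Matrix.mul_assoc]

theorem stmt_4 {k l m n : Type*} [Fintype k] [Fintype l] [Fintype m] [Fintype n]
    [DecidableEq l] [DecidableEq m] [DecidableEq n]
    (U : Matrix k m ℝ) (V : Matrix l n ℝ) (M : Matrix m n ℝ)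
    (hU : Uᵀ * U = 1) (hV : Vᵀ * V = 1) :
    Uᵀ * (U * M * Vᵀ) * V = M ∧
    (∀ Z : Matrix k l ℝ, Uᵀ * Z * V = M → nuclearNorm (U * M * Vᵀ) ≤ nuclearNorm Z) ∧
    (∀ Z : Matrix k l ℝ, Uᵀ * Z * V = M → nuclearNorm Z = nuclearNorm M → Z = U * M * Vᵀ) := by
  classical
  have hU₁ : ‖U‖ ≤ 1 := l2_opNorm_le_one_of_transpose_mul_self_eq_one hU
  have hV₁ : ‖V‖ ≤ 1 := l2_opNorm_le_one_of_transpose_mul_self_eq_one hV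
  refine ⟨?_, fun Z hZ => ?_, fun Z hZ h => eq_mul_mul_transpose_of_nuclearNorm_eq hU hV hZ h⟩
  · simp only [← Matrix.mul_assoc, hU, Matrix.one_mul]
    rw [Matrix.mul_assoc, hV, Matrix.mul_one]
  calc nuclearNorm (U * M * Vᵀ) ≤ nuclearNorm M :=
        nuclearNorm_mul_mul_le hU₁ ((l2_opNorm_transpose V).trans_le hV₁) M
    _ = nuclearNorm (Uᵀ * Z * V) := by rw [hZ]
    _ ≤ nuclearNorm Z := nuclearNorm_mul_mul_le ((l2_opNorm_transpose U).trans_le hU₁) hV₁ Z
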